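/- Let R be a commutative k-algebra and B = R_p(t,sigma,H,J) a BR algebra of rank n. Every simple Z^n-graded B-module is an R-weight module. -/

import Mathlib

open scoped Pointwise TensorProduct

namespace BR

/-- The ordered product `t₁^{α₁} ⋯ tₙ^{αₙ}` in the group of units. -/
def tpow {A : Type*} [Monoid A] {n : ℕ} (t : Fin n → Aˣ) (α : Fin n → ℤ) : Aˣ :=
  ((List.finRange n).map fun i => t i ^ α i).prod

/-- `σ^α = σ₁^{α₁} ⋯ σₙ^{αₙ}` as an algebra automorphism. -/
def σpow {k R : Type*} [CommSemiring k] [Semiring R] [Algebra k R] {n : ℕ}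
    (σ : Fin n → R ≃ₐ[k] R) (α : Fin n → ℤ) : R ≃ₐ[k] R :=
  ((List.finRange n).map fun i => σ i ^ α i).prod

/-- The ideal `I_σ^{(m)}(H, J)`:  `J σ(J) ⋯ σ^{m-1}(J)` for `m > 0`, `R` for `m = 0`,
and `σ⁻¹(H) σ⁻²(H) ⋯ σ^{m}(H)` for `m < 0`. -/
noncomputable def seg {k R : Type*} [Field k] [Ring R] [Algebra k R]
    (σ : R ≃ₐ[k] R) (H J : Submodule k R) (m : ℤ) : Submodule k R :=
  if 0 < m then
    ((List.range m.toNat).map fun i => J.map (σ ^ (i : ℤ)).toLinearMap).prod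
  else if m = 0 then ⊤
  else ((List.range (-m).toNat).map fun i => H.map (σ ^ (-((i : ℤ) + 1))).toLinearMap).prod

/-- `I^{(α)} = I₁^{(α₁)} ⋯ Iₙ^{(αₙ)}`. -/
noncomputable def segVec {k R : Type*} [Field k] [Ring R] [Algebra k R] {n : ℕ}
    (σ : Fin n → R ≃ₐ[k] R) (H J : Fin n → Submodule k R) (α : Fin n → ℤ) :
    Submodule k R :=
  ((List.finRange n).map fun i => seg (σ i) (H i) (J i) (α i)).prod

/-- A Bell–Rogalski datum `(R, t, σ, p, H, J)`. -/
structure IsBRDatum {k R : Type*} [Field k] [Ring R] [Algebra k R] {n : ℕ}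
    (σ : Fin n → R ≃ₐ[k] R) (p : Fin n → Fin n → kˣ)
    (H J : Fin n → Submodule k R) : Prop where
  comm : ∀ i j, σ i * σ j = σ j * σ i
  antisym : ∀ i j, p i j = (p j i)⁻¹
  H_mul_left : ∀ i (r x : R), x ∈ H i → r * x ∈ H i
  H_mul_right : ∀ i (r x : R), x ∈ H i → x * r ∈ H i
  J_mul_left : ∀ i (r x : R), x ∈ J i → r * x ∈ J i
  J_mul_right : ∀ i (r x : R), x ∈ J i → x * r ∈ J i
  mapH : ∀ i j, i ≠ j → (H j).map (σ i).toLinearMap = H j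
  mapJ : ∀ i j, i ≠ j → (J j).map (σ i).toLinearMap = J j
  HH : ∀ i j, i ≠ j → H i * H j = H j * H i
  HJ : ∀ i j, i ≠ j → H i * J j = J j * H i
  JJ : ∀ i j, i ≠ j → J i * J j = J j * J i
  seg_ne_bot : ∀ i (m : ℤ), seg (σ i) (H i) (J i) m ≠ ⊥

/-- A realization of the iterated skew Laurent extension `R_p[t^{±1}; σ]`:
an algebra `A` containing `R`, with units `t i` satisfying the skew commutation
relations, which is a free left `R`-module with basis the monomials `t^α`. -/
structure SkewLaurent (k : Type*) [Field k] {R : Type*} [Ring R] [Algebra k R] {n : ℕ}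
    (σ : Fin n → R ≃ₐ[k] R) (p : Fin n → Fin n → kˣ)
    (A : Type*) [Ring A] [Algebra k A] where
  ι : R →ₐ[k] A
  t : Fin n → Aˣ
  rel_r : ∀ i (r : R), (t i : A) * ι r = ι (σ i r) * (t i : A)
  rel_t : ∀ i j, i ≠ j → (t j : A) * (t i : A) =
    algebraMap k A (p i j) * ((t i : A) * (t j : A))
  repr_exists : ∀ a : A, ∃ c : (Fin n → ℤ) →₀ R,
    a = c.sum fun α r => ι r * (tpow t α : A)
  repr_free : ∀ c : (Fin n → ℤ) →₀ R,
    (c.sum fun α r => ι r * (tpow t α : A)) = 0 → c = 0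

/-- The graded component `B_α = I^{(α)} t^α` of the Bell–Rogalski algebra, as a
`k`-subspace of the ambient skew Laurent extension. -/
noncomputable def brComponent {k R : Type*} [Field k] [Ring R] [Algebra k R] {n : ℕ}
    {σ : Fin n → R ≃ₐ[k] R} {p : Fin n → Fin n → kˣ}
    {A : Type*} [Ring A] [Algebra k A]
    (E : SkewLaurent k σ p A) (H J : Fin n → Submodule k R) (α : Fin n → ℤ) :
    Submodule k A :=
  ((segVec σ H J α).map E.ι.toLinearMap).map (LinearMap.mulRight k ((tpow E.t α : Aˣ) : A))

/-- The Bell–Rogalski algebra `B = ⊕_α I^{(α)} t^α` as a `k`-subspace of the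
ambient skew Laurent extension. -/
noncomputable def brSubmodule {k R : Type*} [Field k] [Ring R] [Algebra k R] {n : ℕ}
    {σ : Fin n → R ≃ₐ[k] R} {p : Fin n → Fin n → kˣ}
    {A : Type*} [Ring A] [Algebra k A]
    (E : SkewLaurent k σ p A) (H J : Fin n → Submodule k R) : Submodule k A :=
  ⨆ α : Fin n → ℤ, brComponent E H J α

/-- The weight space `M_𝔪 = {v ∈ M ∣ 𝔪 ⬝ v = 0}` of a module over an algebra `B`
receiving a map from `R`. -/
def weightSpace {k R B : Type*} [Field k] [CommRing R] [Algebra k R]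
    [Ring B] [Algebra k B] (ιB : R →ₐ[k] B)
    (M : Type*) [AddCommGroup M] [Module B M] (m : Ideal R) : AddSubgroup M where
  carrier := {v | ∀ r ∈ m, ιB r • v = 0}
  zero_mem' := by intro r hr; simp
  add_mem' := by intro a b ha hb r hr; rw [smul_add, ha r hr, hb r hr, add_zero]
  neg_mem' := by intro a ha r hr; rw [smul_neg, ha r hr, neg_zero]

/-- `M` is a weight module: the direct sum of its weight spaces over maximal ideals. -/
def IsWeightModule {k R B : Type*} [Field k] [CommRing R] [Algebra k R]
    [Ring B] [Algebra k B] (ιB : R →ₐ[k] B)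
    (M : Type*) [AddCommGroup M] [Module B M] : Prop :=
  (⨆ m : MaximalSpectrum R, weightSpace ιB M m.asIdeal) = ⊤ ∧
    iSupIndep fun m : MaximalSpectrum R => weightSpace ιB M m.asIdeal

/-- A bundled simple weight module over `B`. -/
structure SimpleWeightWitness.{w, uk, uR, uB} (k : Type uk) [Field k] {R : Type uR}
    [CommRing R] [Algebra k R]
    (B : Type uB) [Ring B] [Algebra k B] (ιB : R →ₐ[k] B) where
  M : Type w
  [acg : AddCommGroup M]
  [mod : Module B M]
  simple : IsSimpleModule B M
  weight : IsWeightModule ιB M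

attribute [instance] SimpleWeightWitness.acg SimpleWeightWitness.mod

/-- The support of a bundled weight module. -/
def SimpleWeightWitness.supp {k : Type*} [Field k] {R : Type*} [CommRing R] [Algebra k R]
    {B : Type*} [Ring B] [Algebra k B] {ιB : R →ₐ[k] B}
    (W : SimpleWeightWitness k B ιB) : Set (MaximalSpectrum R) :=
  {m' | weightSpace ιB W.M m'.asIdeal ≠ ⊥}

/-- Isomorphism of bundled weight modules, as `B`-modules. -/
def SimpleWeightWitness.Iso {k : Type*} [Field k] {R : Type*} [CommRing R] [Algebra k R]
    {B : Type*} [Ring B] [Algebra k B] {ιB : R →ₐ[k] B}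
    (W : SimpleWeightWitness k B ιB) (W' : SimpleWeightWitness k B ιB) : Prop :=
  Nonempty (W.M ≃ₗ[B] W'.M)

/-- Gelfand–Kirillov dimension of a `k`-algebra. -/
noncomputable def GKdim (k A : Type*) [Field k] [Ring A] [Algebra k A] : ENNReal :=
  ⨆ S : Finset A, Filter.limsup
    (fun n : ℕ => ENNReal.ofReal (Real.logb n
      (Module.finrank k ↥((Submodule.span k (insert (1 : A) (S : Set A))) ^ n))))
    Filter.atTop

/-- An automorphism is locally algebraic if every orbit is contained in a
finite-dimensional subspace. -/
def LocallyAlgebraic {k R : Type*} [Field k] [Ring R] [Algebra k R]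
    (σ : R ≃ₐ[k] R) : Prop :=
  ∀ r : R, ∃ V : Submodule k R, FiniteDimensional k ↥V ∧ ∀ m : ℕ, (σ ^ m) r ∈ V

/-- The defining relations of a twisted generalized Weyl algebra of type `(A₁)ⁿ`. -/
def TGWARels (k : Type*) [Field k] {R : Type*} [Ring R] [Algebra k R] {n : ℕ}
    (σ : Fin n → R ≃ₐ[k] R) (a : Fin n → R) (γ μ : Fin n → Fin n → kˣ)
    {T : Type*} [Ring T] [Algebra k T]
    (ι : R →ₐ[k] T) (Xp Xm : Fin n → T) : Prop :=
  (∀ i (r : R), Xp i * ι r = ι (σ i r) * Xp i) ∧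
  (∀ i (r : R), Xm i * ι r = ι ((σ i)⁻¹ r) * Xm i) ∧
  (∀ i, Xm i * Xp i = ι (a i)) ∧
  (∀ i, Xp i * Xm i = ι (σ i (a i))) ∧
  (∀ i j, i ≠ j → Xp i * Xm j = ((μ i j : kˣ) : k) • (Xm j * Xp i)) ∧
  (∀ i j, i ≠ j → Xp i * Xp j = ((γ i j * (μ i j)⁻¹ : kˣ) : k) • (Xp j * Xp i)) ∧
  (∀ i j, i ≠ j → Xm j * Xm i = ((γ i j * (μ j i)⁻¹ : kˣ) : k) • (Xm i * Xm j))

/-- A realization of the twisted generalized Weyl algebra `A_μ(R, σ, a)` of type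
`(A₁)ⁿ`: it satisfies the defining relations, is `ℤⁿ`-graded with `deg Xᵢ± = ±eᵢ`,
and is universal with respect to the relations. -/
structure TGWA (k : Type*) [Field k] {R : Type*} [Ring R] [Algebra k R] {n : ℕ}
    (σ : Fin n → R ≃ₐ[k] R) (a : Fin n → R) (γ μ : Fin n → Fin n → kˣ)
    (T : Type*) [Ring T] [Algebra k T] where
  ι : R →ₐ[k] T
  Xp : Fin n → T
  Xm : Fin n → T
  rels : TGWARels k σ a γ μ ι Xp Xm
  grading : (Fin n → ℤ) → Submodule k T
  grading_internal : DirectSum.IsInternal grading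
  grading_mul : ∀ (α β : Fin n → ℤ) (x y : T),
    x ∈ grading α → y ∈ grading β → x * y ∈ grading (α + β)
  ι_mem : ∀ r, ι r ∈ grading 0
  Xp_mem : ∀ i, Xp i ∈ grading (Pi.single i 1)
  Xm_mem : ∀ i, Xm i ∈ grading (-Pi.single i 1)
  free : ∀ {C : Type} [Ring C] [Algebra k C] (ιC : R →ₐ[k] C) (Yp Ym : Fin n → C),
    TGWARels k σ a γ μ ιC Yp Ym →
    ∃! f : T →ₐ[k] C, f.comp ι = ιC ∧ (∀ i, f (Xp i) = Yp i) ∧ (∀ i, f (Xm i) = Ym i)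



section AuxProofs

variable {k R A : Type*} [Field k] [CommRing R] [Algebra k R] [Ring A] [Algebra k A]
  {n : ℕ} {σ : Fin n → R ≃ₐ[k] R} {p : Fin n → Fin n → kˣ}

theorem tpow_zero (t : Fin n → Aˣ) : tpow t (0 : Fin n → ℤ) = 1 := by
  apply List.prod_eq_one
  intro x hx
  simp only [List.mem_map] at hx
  obtain ⟨i, -, rfl⟩ := hx
  simp

theorem SkewLaurent.ι_injective (E : SkewLaurent k σ p A) : Function.Injective E.ι := by
  intro r s h
  have h0 : E.ι (r - s) = 0 := by rw [map_sub, h, sub_self]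
  have hc : (Finsupp.single (0 : Fin n → ℤ) (r - s)).sum
      (fun α x => E.ι x * ((tpow E.t α : Aˣ) : A)) = 0 := by
    rw [Finsupp.sum_single_index (by simp), h0, zero_mul]
  have := E.repr_free _ hc
  have := Finsupp.single_eq_zero.mp this
  exact sub_eq_zero.mp this

theorem exists_of_mem_brComponent (E : SkewLaurent k σ p A) {H J : Fin n → Submodule k R}
    {β : Fin n → ℤ} {x : A} (hx : x ∈ brComponent E H J β) :
    ∃ s : R, x = E.ι s * ((tpow E.t β : Aˣ) : A) ∧ (x = 0 → s = 0) := by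
  obtain ⟨y, hy, rfl⟩ := hx
  obtain ⟨s, -, rfl⟩ := hy
  simp only [LinearMap.mulRight_apply, AlgHom.toLinearMap_apply]
  by_cases h : E.ι s * ((tpow E.t β : Aˣ) : A) = 0
  · refine ⟨0, ?_, fun _ => rfl⟩
    rw [map_zero, zero_mul, h]
  · exact ⟨s, rfl, fun hc => absurd hc h⟩

theorem mem_brComponent_zero (E : SkewLaurent k σ p A) {H J : Fin n → Submodule k R}
    {r : R} (h : E.ι r ∈ brSubmodule E H J) : E.ι r ∈ brComponent E H J 0 := by
  classical
  rw [brSubmodule, Submodule.mem_iSup_iff_exists_finsupp] at h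
  obtain ⟨f, hf, hsum⟩ := h
  choose s hs h0 using fun β => exists_of_mem_brComponent E (hf β)
  set c : (Fin n → ℤ) →₀ R := Finsupp.onFinset f.support s
      (fun β hβ => by
        rw [Finsupp.mem_support_iff]
        exact fun hc => hβ (h0 β hc)) with hcdef
  have hcs : c.sum (fun α x => E.ι x * ((tpow E.t α : Aˣ) : A)) = E.ι r := by
    rw [Finsupp.sum_of_support_subset c Finsupp.support_onFinset_subset _
      (by intro i _; simp)]
    rw [← hsum]
    refine Finset.sum_congr rfl fun β _ => ?_
    have : c β = s β := rfl
    rw [this, ← hs β]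
  have hczero : c - Finsupp.single (0 : Fin n → ℤ) r = 0 := by
    apply E.repr_free
    rw [Finsupp.sum_sub_index (fun a b₁ b₂ => by rw [map_sub, sub_mul])]
    rw [hcs, Finsupp.sum_single_index (by simp), tpow_zero, Units.val_one, mul_one, sub_self]
  have hcr : c = Finsupp.single (0 : Fin n → ℤ) r := sub_eq_zero.mp hczero
  have hs0 : s 0 = r := by
    have := congrArg (fun g : (Fin n → ℤ) →₀ R => g 0) hcr
    exact (by simpa using this : c 0 = r)
  have : E.ι r = f 0 := by
    rw [hs 0, hs0, tpow_zero, Units.val_one, mul_one]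
  rw [this]
  exact hf 0

theorem exists_of_mem_brComponent_zero (E : SkewLaurent k σ p A) {H J : Fin n → Submodule k R}
    {x : A} (hx : x ∈ brComponent E H J 0) : ∃ s : R, E.ι s = x := by
  obtain ⟨s, hs, -⟩ := exists_of_mem_brComponent E hx
  exact ⟨s, by rw [hs, tpow_zero, Units.val_one, mul_one]⟩

end AuxProofs

/-- Every simple `ℤⁿ`-graded `B`-module is an `R`-weight
module. -/
theorem brAlgebra_simple_graded_is_weight
    {k R A : Type*} [Field k] [CommRing R] [Algebra k R] [Ring A] [Algebra k A]
    {n : ℕ} {σ : Fin n → R ≃ₐ[k] R} {p : Fin n → Fin n → kˣ}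
    {H J : Fin n → Submodule k R} (hD : IsBRDatum σ p H J)
    (E : SkewLaurent k σ p A) (B : Subalgebra k A)
    (hB : Subalgebra.toSubmodule B = brSubmodule E H J)
    (ιB : R →ₐ[k] ↥B) (hιB : ∀ r : R, ((ιB r : ↥B) : A) = E.ι r)
    -- a `ℤⁿ`-graded `B`-module `M`
    (M : Type*) [AddCommGroup M] [Module ↥B M] [Module k M]
    [IsScalarTower k ↥B M]
    (Mg : (Fin n → ℤ) → Submodule k M)
    (hMg : DirectSum.IsInternal Mg)
    (hMgmul : ∀ (β α : Fin n → ℤ) (b : ↥B) (v : M),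
      (b : A) ∈ brComponent E H J β → v ∈ Mg α → b • v ∈ Mg (α + β))
    -- which is simple
    (hsimple : IsSimpleModule ↥B M) :
    IsWeightModule ιB M := by
  classical
  have hmem : ∀ x : A, x ∈ B ↔ x ∈ brSubmodule E H J := fun x => by
    rw [← Subalgebra.mem_toSubmodule, hB]
  have hcomp_le : ∀ β, brComponent E H J β ≤ brSubmodule E H J := fun β => le_iSup _ β
  have hι0 : ∀ r : R, E.ι r ∈ brComponent E H J 0 := fun r =>
    mem_brComponent_zero E (by rw [← hmem, ← hιB r]; exact (ιB r).2)
  -- the key lemma: homogeneous vectors are connected by degree-zero elements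
  have key : ∀ (α : Fin n → ℤ) (u v : M), u ∈ Mg α → u ≠ 0 → v ∈ Mg α →
      ∃ s : R, ιB s • u = v := by
    intro α u v hu hune hv
    have hspan : Submodule.span (↥B) {u} = ⊤ := by
      rcases eq_bot_or_eq_top (Submodule.span (↥B) {u}) with h | h
      · exfalso
        apply hune
        have hm : u ∈ Submodule.span (↥B) {u} := Submodule.mem_span_singleton_self u
        rw [h, Submodule.mem_bot] at hm
        exact hm
      · exact h
    obtain ⟨b, rfl⟩ : ∃ b : ↥B, b • u = v := by
      have : v ∈ Submodule.span (↥B) {u} := hspan ▸ Submodule.mem_top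
      exact Submodule.mem_span_singleton.mp this
    have hbA : (b : A) ∈ brSubmodule E H J := (hmem _).mp b.2
    rw [brSubmodule, Submodule.mem_iSup_iff_exists_finsupp] at hbA
    obtain ⟨f, hf, hsum⟩ := hbA
    have hfB : ∀ β, f β ∈ B := fun β => (hmem _).mpr (hcomp_le β (hf β))
    set g : (Fin n → ℤ) → ↥B := fun β => ⟨f β, hfB β⟩ with hg
    have hbsum : b = ∑ β ∈ f.support, g β := by
      apply Subtype.ext
      have hcoe : ((∑ β ∈ f.support, g β : ↥B) : A) = ∑ β ∈ f.support, ((g β : ↥B) : A) := by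
        exact map_sum (Subalgebra.val B) g f.support
      rw [hcoe, ← hsum]
      rfl
    have hv' : b • u = ∑ β ∈ f.support, g β • u := by
      rw [hbsum, Finset.sum_smul]
    have hg0mem : g 0 • u ∈ Mg α := by
      have := hMgmul 0 α (g 0) u (hf 0) hu
      rwa [add_zero] at this
    have hsplit : b • u - g 0 • u = ∑ β ∈ f.support.erase 0, g β • u := by
      by_cases h0 : (0 : Fin n → ℤ) ∈ f.support
      · rw [hv', ← Finset.add_sum_erase _ _ h0, add_sub_cancel_left]
      · have hz : g 0 = 0 := Subtype.ext (by
          exact Finsupp.notMem_support_iff.mp h0)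
        rw [hv', hz, zero_smul, sub_zero, Finset.erase_eq_of_notMem h0]
    have hmem2 : b • u - g 0 • u ∈ ⨆ (γ) (_ : γ ≠ α), Mg γ := by
      rw [hsplit]
      refine Submodule.sum_mem _ fun β hβ => ?_
      have hβ0 : β ≠ 0 := Finset.ne_of_mem_erase hβ
      have hne : α + β ≠ α := fun hc => hβ0 (by
        have : α + β = α + 0 := by rw [hc, add_zero]
        exact add_left_cancel this)
      exact Submodule.mem_iSup_of_mem (α + β)
        (Submodule.mem_iSup_of_mem hne (hMgmul β α (g β) u (hf β) hu))
    have hzero : b • u - g 0 • u = 0 :=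
      Submodule.disjoint_def.mp (hMg.submodule_iSupIndep α) _
        (Submodule.sub_mem _ hv hg0mem) hmem2
    obtain ⟨s, hs⟩ := exists_of_mem_brComponent_zero E (hf 0)
    refine ⟨s, ?_⟩
    have hsg : ιB s = g 0 := Subtype.ext (by rw [hιB s, hs])
    rw [hsg]
    exact (sub_eq_zero.mp hzero).symm
  constructor
  · -- the weight spaces exhaust M
    rw [eq_top_iff]
    intro v _
    have hv : v ∈ ⨆ α, Mg α := hMg.submodule_iSup_eq_top ▸ Submodule.mem_top
    refine Submodule.iSup_induction (motive := fun w =>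
      w ∈ ⨆ m : MaximalSpectrum R, weightSpace ιB M m.asIdeal) Mg hv ?_ (zero_mem _)
      (fun x y hx hy => add_mem hx hy)
    intro α u hu
    by_cases hune : u = 0
    · rw [hune]; exact zero_mem _
    · set Ann : Ideal R :=
        { carrier := {r | ιB r • u = 0}
          add_mem' := fun {a b} ha hb => by
            show ιB (a + b) • u = 0
            rw [map_add, add_smul, ha, hb, add_zero]
          zero_mem' := by
            show ιB 0 • u = 0
            rw [map_zero, zero_smul]
          smul_mem' := fun c x hx => by
            show ιB (c * x) • u = 0
            rw [map_mul, mul_smul, hx, smul_zero] } with hAnn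
      have hMax : Ann.IsMaximal := by
        rw [Ideal.isMaximal_iff]
        constructor
        · intro h1
          apply hune
          have : ιB 1 • u = 0 := h1
          rwa [map_one, one_smul] at this
        · intro I x hle hx hxI
          have hw : ιB x • u ≠ 0 := hx
          have hwmem : ιB x • u ∈ Mg α := by
            have := hMgmul 0 α (ιB x) u (by rw [hιB]; exact hι0 x) hu
            rwa [add_zero] at this
          obtain ⟨s, hs⟩ := key α (ιB x • u) u hwmem hw hu
          have h1 : (1 : R) - s * x ∈ Ann := by
            show ιB (1 - s * x) • u = 0
            rw [map_sub, sub_smul, map_one, one_smul, map_mul, mul_smul, hs, sub_self]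
          have h1' : (1 : R) = (1 - s * x) + s * x := by ring
          rw [h1']
          exact I.add_mem (hle h1) (I.mul_mem_left s hxI)
      have humem : u ∈ weightSpace ιB M Ann := fun r hr => hr
      exact (le_iSup (fun m : MaximalSpectrum R => weightSpace ιB M m.asIdeal)
        ⟨Ann, hMax⟩) humem
  · -- independence of the weight spaces
    intro m0
    rw [AddSubgroup.disjoint_def]
    intro v hv1 hv2
    have hC : ∃ a : R, a ∉ m0.asIdeal ∧ ιB a • v = 0 := by
      refine AddSubgroup.iSup_induction
        (C := fun w => ∃ a : R, a ∉ m0.asIdeal ∧ ιB a • w = 0) _ hv2 ?_ ?_ ?_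
      · intro m' w hw
        by_cases h : m' = m0
        · rw [h, iSup_neg (by simp)] at hw
          exact ⟨1, (Ideal.ne_top_iff_one _).mp m0.isMaximal.ne_top, by
            rw [(AddSubgroup.mem_bot).mp hw, smul_zero]⟩
        · rw [iSup_pos h] at hw
          have hne : ¬ m'.asIdeal ≤ m0.asIdeal := by
            intro hle
            exact h (MaximalSpectrum.ext (m'.isMaximal.eq_of_le m0.isMaximal.ne_top hle))
          obtain ⟨a, ha, ha0⟩ := SetLike.not_le_iff_exists.mp hne
          exact ⟨a, ha0, hw a ha⟩
      · exact ⟨1, (Ideal.ne_top_iff_one _).mp m0.isMaximal.ne_top, smul_zero _⟩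
      · rintro x y ⟨a, ha, hax⟩ ⟨a', ha', hay⟩
        refine ⟨a * a', fun hc => ?_, ?_⟩
        · rcases m0.isMaximal.isPrime.mem_or_mem hc with h | h
          exacts [ha h, ha' h]
        · rw [smul_add]
          have h1 : ιB (a * a') • x = 0 := by
            rw [mul_comm, map_mul, mul_smul, hax, smul_zero]
          have h2 : ιB (a * a') • y = 0 := by
            rw [map_mul, mul_smul, hay, smul_zero]
          rw [h1, h2, add_zero]
    obtain ⟨a, ha, hav⟩ := hC
    obtain ⟨z, i, hi, hz⟩ := m0.isMaximal.exists_inv ha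
    have hfin : ιB (z * a + i) • v = 0 := by
      rw [map_add, add_smul, map_mul, mul_smul, hav, smul_zero, hv1 i hi, add_zero]
    rwa [hz, map_one, one_smul] at hfin


end BR
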